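/- arXiv:math/0210224 — 5 statements merged into one kernel-verified Lean document; each statement's English description precedes it below -/
import Mathlib

section
/- For every n ≥ 1, the map σ ↦ v_σ = (σ(1), …, σ(n)) is injective on the symmetric group S_n, and the set of extreme points of the permutahedron P_n is exactly {v_σ : σ ∈ S_n}; hence P_n has exactly n! vertices. -/
/-!
All vertices `v_σ` have the same Euclidean norm, since they are permutations of one vector.
In the strictly convex space `ℓ²(Fin n)`, a point of a sphere is an extreme point of the closed
ball, hence of any subset of the ball containing it, in particular of the convex hull of the
vertices. Conversely, every extreme point of a convex hull lies in the generating set.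
-/

/-- The vertex of the permutahedron `P_n` associated to a permutation `σ` of `{1,…,n}`:
the point `(σ(1), …, σ(n)) ∈ ℝ^n`. -/
def permVert (n : ℕ) (σ : Equiv.Perm (Fin n)) : Fin n → ℝ := fun i => ((σ i : ℕ) + 1 : ℝ)

/-- The permutahedron `P_n ⊆ ℝ^n`: the convex hull of the `n!` points `v_σ`. -/
def permutahedron (n : ℕ) : Set (Fin n → ℝ) := convexHull ℝ (Set.range (permVert n))

open Set Metric

theorem StrictConvexSpace.sphere_subset_extremePoints_closedBall' {E : Type*}
    [NormedAddCommGroup E] [NormedSpace ℝ E] [StrictConvexSpace ℝ E] (a : E) {r : ℝ} :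
    sphere a r ⊆ extremePoints ℝ (closedBall a r) := by
  rcases eq_or_ne r 0 with rfl | hr
  · simp
  · exact sphere_subset_extremePoints_closedBall a hr

theorem subset_extremePoints_convexHull_of_subset_sphere {E : Type*}
    [NormedAddCommGroup E] [NormedSpace ℝ E] [StrictConvexSpace ℝ E]
    {s : Set E} {a : E} {r : ℝ} (hs : s ⊆ sphere a r) :
    s ⊆ extremePoints ℝ (convexHull ℝ s) := by
  have hball : convexHull ℝ s ⊆ closedBall a r :=
    convexHull_min (hs.trans sphere_subset_closedBall) (convex_closedBall a r)
  intro x hx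
  exact inter_extremePoints_subset_extremePoints_of_subset hball
    ⟨subset_convexHull ℝ s hx,
      StrictConvexSpace.sphere_subset_extremePoints_closedBall' a (hs hx)⟩

theorem LinearEquiv.subset_extremePoints_convexHull_iff {E F : Type*} [AddCommGroup E]
    [Module ℝ E] [AddCommGroup F] [Module ℝ F] (e : E ≃ₗ[ℝ] F) {s : Set E} :
    e '' s ⊆ extremePoints ℝ (convexHull ℝ (e '' s)) ↔
      s ⊆ extremePoints ℝ (convexHull ℝ s) := by
  have hull : e '' convexHull ℝ s = convexHull ℝ (e '' s) :=
    e.toLinearMap.image_convexHull s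
  rw [← hull, ← image_extremePoints, image_subset_image_iff e.injective]

theorem permVert_injective (n : ℕ) : Function.Injective (permVert n) := by
  intro σ τ h
  ext i
  simpa [permVert] using congrFun h i

theorem norm_toLp_permVert (n : ℕ) (σ : Equiv.Perm (Fin n)) :
    ‖WithLp.toLp 2 (permVert n σ)‖ = ‖WithLp.toLp 2 (permVert n 1)‖ := by
  simp only [EuclideanSpace.norm_eq]
  congr 1
  exact Equiv.sum_comp σ fun j => ‖((j : ℕ) : ℝ) + 1‖ ^ 2

theorem range_permVert_subset_extremePoints (n : ℕ) :
    range (permVert n) ⊆ extremePoints ℝ (permutahedron n) := by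
  rw [permutahedron,
    ← (WithLp.linearEquiv 2 ℝ (Fin n → ℝ)).symm.subset_extremePoints_convexHull_iff]
  refine subset_extremePoints_convexHull_of_subset_sphere (a := 0)
    (r := ‖WithLp.toLp 2 (permVert n 1)‖) ?_
  rintro _ ⟨_, ⟨σ, rfl⟩, rfl⟩
  simpa using norm_toLp_permVert n σ

theorem permutahedron_extremePoints_general (n : ℕ) :
    Function.Injective (permVert n) ∧
    Set.extremePoints ℝ (permutahedron n) = Set.range (permVert n) ∧
    (Set.extremePoints ℝ (permutahedron n)).ncard = Nat.factorial n := by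
  have hext : extremePoints ℝ (permutahedron n) = range (permVert n) :=
    extremePoints_convexHull_subset.antisymm (range_permVert_subset_extremePoints n)
  refine ⟨permVert_injective n, hext, ?_⟩
  rw [hext, ← image_univ, ncard_image_of_injective _ (permVert_injective n), ncard_univ,
    Nat.card_eq_fintype_card, Fintype.card_perm, Fintype.card_fin]

/-- For every `n ≥ 1`: the map `σ ↦ v_σ` is injective on the symmetric group `S_n`; the
set of extreme points of `P_n` is exactly `{v_σ : σ ∈ S_n}`; hence `P_n` has exactly
`n!` vertices (extreme points). -/
theorem permutahedron_extremePoints (n : ℕ) (hn : 1 ≤ n) :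
    Function.Injective (permVert n) ∧
    Set.extremePoints ℝ (permutahedron n) = Set.range (permVert n) ∧
    (Set.extremePoints ℝ (permutahedron n)).ncard = Nat.factorial n :=
  permutahedron_extremePoints_general n
end

section
/- Let n ≥ 1 and let U_1|U_2|⋯|U_p be an ordered partition of {1, …, n} into nonempty blocks, and for 1 ≤ j < p set m_j = #(U_1 ∪ ⋯ ∪ U_j) and t_j = n + (n−1) + ⋯ + (n − m_j + 1). Then the set F(U_1|⋯|U_p) = {x ∈ P_n : Σ_{i ∈ U_1∪⋯∪U_j} x_i = t_j for all 1 ≤ j < p} is a nonempty exposed face of P_n; it equals the convex hull of the vertices v_σ for which σ maps U_1 onto the #U_1 largest values {n−m_1+1,…,n}, U_2 onto the next #U_2 values, and so on; and its affine dimension equals n − p. Thus the (n−p)-dimensional faces of P_n of this form are indexed by the ordered partitions of {1,…,n} into p blocks, distinct ordered partitions giving distinct faces. -/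
/-- The sum of the `m` largest values among `{1,…,n}`: `(n−m+1) + (n−m+2) + ⋯ + n`. -/
def topSum (n m : ℕ) : ℕ := ∑ i ∈ Finset.Icc (n - m + 1) n, i

/-- The union `U_1 ∪ ⋯ ∪ U_j` of the first `j` blocks of an ordered partition
`U : Fin p → Finset (Fin n)`. -/
def cumulBlocks (n p : ℕ) (U : Fin p → Finset (Fin n)) (j : ℕ) : Finset (Fin n) :=
  (Finset.univ.filter (fun l : Fin p => (l : ℕ) < j)).biUnion U

/-- The face `F(U_1|⋯|U_p) = {x ∈ P_n : Σ_{i ∈ U_1∪⋯∪U_j} x_i = t_j for all 1 ≤ j < p}`,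
where `m_j = #(U_1∪⋯∪U_j)` and `t_j = n + (n−1) + ⋯ + (n−m_j+1)`. -/
def permFace (n p : ℕ) (U : Fin p → Finset (Fin n)) : Set (Fin n → ℝ) :=
  {x ∈ permutahedron n | ∀ j : ℕ, 1 ≤ j → j < p →
    ∑ i ∈ cumulBlocks n p U j, x i = (topSum n (cumulBlocks n p U j).card : ℝ)}

open Finset Function

-- Exchange argument: the elements of `S \ I` are at most `n - #S`, while the equally many
-- elements of `I \ S` exceed it.
theorem sum_add_card_sdiff_le_topSum {n : ℕ} {S : Finset ℕ} (hS : S ⊆ Icc 1 n) :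
    ∑ x ∈ S, x + #(S \ Icc (n - #S + 1) n) ≤ topSum n #S := by
  set I := Icc (n - #S + 1) n
  have hSn : #S ≤ n := by simpa using card_le_card hS
  calc ∑ x ∈ S, x + #(S \ I)
      ≤ ∑ x ∈ S ∩ I, x + #(S \ I) • (n - #S + 1) := by
        rw [← sum_inter_add_sum_sdiff S I, add_assoc, smul_eq_mul, Nat.mul_succ, ← smul_eq_mul]
        gcongr
        refine sum_le_card_nsmul _ _ _ fun x hx => ?_
        have := hS (mem_sdiff.1 hx).1
        simp only [I, mem_sdiff, mem_Icc] at hx this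
        omega
    _ = ∑ x ∈ I ∩ S, x + #(I \ S) • (n - #S + 1) := by
        rw [inter_comm, card_sdiff_comm (by simp [I]; omega)]
    _ ≤ topSum n #S := by
        rw [topSum, ← sum_inter_add_sum_sdiff I S]
        gcongr
        refine card_nsmul_le_sum _ _ _ fun x hx => ?_
        simp only [I, mem_sdiff, mem_Icc] at hx
        exact hx.1.1

theorem sum_le_topSum {n : ℕ} {S : Finset ℕ} (hS : S ⊆ Icc 1 n) : ∑ x ∈ S, x ≤ topSum n #S :=
  le_of_add_le_left (sum_add_card_sdiff_le_topSum hS)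

theorem sum_eq_topSum_iff {n : ℕ} {S : Finset ℕ} (hS : S ⊆ Icc 1 n) :
    ∑ x ∈ S, x = topSum n #S ↔ S = Icc (n - #S + 1) n := by
  refine ⟨fun h => ?_, fun h => by rw [topSum, ← h]⟩
  have hsdiff := sum_add_card_sdiff_le_topSum hS
  rw [h, add_le_iff_nonpos_right, nonpos_iff_eq_zero, card_eq_zero, sdiff_eq_empty_iff_subset]
    at hsdiff
  have hSn : #S ≤ n := by simpa using card_le_card hS
  exact eq_of_subset_of_card_le hsdiff (by simp; omega)

section Vertices

variable {n : ℕ}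

theorem image_perm_succ_subset_Icc (σ : Equiv.Perm (Fin n)) (T : Finset (Fin n)) :
    T.image (fun i => (σ i : ℕ) + 1) ⊆ Icc 1 n := by
  intro x hx
  obtain ⟨i, -, rfl⟩ := mem_image.1 hx
  simp only [mem_Icc]
  omega

theorem card_image_perm_succ (σ : Equiv.Perm (Fin n)) (T : Finset (Fin n)) :
    #(T.image (fun i => (σ i : ℕ) + 1)) = #T :=
  card_image_of_injective _ fun i j h => σ.injective (Fin.ext (by simpa using h))

theorem sum_permVert (σ : Equiv.Perm (Fin n)) (T : Finset (Fin n)) :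
    ∑ i ∈ T, permVert n σ i = ((∑ x ∈ T.image (fun i => (σ i : ℕ) + 1), x : ℕ) : ℝ) := by
  rw [sum_image fun i _ j _ h => σ.injective (Fin.ext (by simpa using h))]
  push_cast
  rfl

theorem sum_permVert_eq_topSum_iff (σ : Equiv.Perm (Fin n)) (T : Finset (Fin n)) :
    ∑ i ∈ T, permVert n σ i = topSum n #T ↔
      T.image (fun i => (σ i : ℕ) + 1) = Icc (n - #T + 1) n := by
  rw [sum_permVert, Nat.cast_inj, ← card_image_perm_succ σ T]
  exact sum_eq_topSum_iff (image_perm_succ_subset_Icc σ T)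

theorem image_perm_succ_eq_Icc_iff (σ : Equiv.Perm (Fin n)) (T : Finset (Fin n)) :
    T.image (fun i => (σ i : ℕ) + 1) = Icc (n - #T + 1) n ↔ ∀ i ∈ T, ∀ j ∉ T, σ j < σ i := by
  constructor
  · intro h i hi j hj
    have hi' : (σ i : ℕ) + 1 ∈ Icc (n - #T + 1) n := h ▸ mem_image_of_mem _ hi
    have hj' : (σ j : ℕ) + 1 ∉ Icc (n - #T + 1) n := by
      rw [← h]
      intro hmem
      obtain ⟨k, hk, hσk⟩ := mem_image.1 hmem
      have hkj : k = j := σ.injective (Fin.ext (by omega))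
      exact hj (hkj ▸ hk)
    simp only [mem_Icc] at hi' hj'
    rw [Fin.lt_def]
    omega
  · intro h
    have hT : #T ≤ n := by simpa using card_le_univ T
    refine eq_of_subset_of_card_le (fun x hx => ?_) (by simp [card_image_perm_succ]; omega)
    obtain ⟨i, hi, rfl⟩ := mem_image.1 hx
    have hcompl : #Tᶜ ≤ #(Iio (σ i)) :=
      card_le_card_of_injOn σ (fun j hj => by simpa using h i hi j (by simpa using hj))
        σ.injective.injOn
    rw [card_compl, Fintype.card_fin, Fin.card_Iio] at hcompl
    simp only [mem_Icc]
    omega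

theorem permVert_mem_permutahedron (σ : Equiv.Perm (Fin n)) : permVert n σ ∈ permutahedron n :=
  subset_convexHull ℝ _ ⟨σ, rfl⟩

theorem isLinearMap_sum (T : Finset (Fin n)) :
    IsLinearMap ℝ (fun x : Fin n → ℝ => ∑ i ∈ T, x i) :=
  ⟨fun _ _ => sum_add_distrib, fun _ _ => (mul_sum _ _ _).symm⟩

theorem sum_le_topSum_of_mem_permutahedron {x : Fin n → ℝ} (hx : x ∈ permutahedron n)
    (T : Finset (Fin n)) : ∑ i ∈ T, x i ≤ topSum n #T := by
  refine convexHull_min ?_ (convex_halfSpace_le (isLinearMap_sum T) _) hx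
  rintro _ ⟨σ, rfl⟩
  rw [Set.mem_ofPred_eq, sum_permVert, ← card_image_perm_succ σ T]
  exact_mod_cast sum_le_topSum (image_perm_succ_subset_Icc σ T)

theorem sum_eq_topSum_of_mem_permutahedron {x : Fin n → ℝ} (hx : x ∈ permutahedron n) :
    ∑ i, x i = topSum n n := by
  refine convexHull_min ?_ (convex_hyperplane (isLinearMap_sum univ) _) hx
  rintro _ ⟨σ, rfl⟩
  have himage : univ.image (fun i => (σ i : ℕ) + 1) = Icc 1 n :=
    eq_of_subset_of_card_le (image_perm_succ_subset_Icc σ univ) (by simp [card_image_perm_succ])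
  simpa using (sum_permVert_eq_topSum_iff σ univ).2 (by simpa using himage)

end Vertices

theorem isExposed_setOf_eq_of_le {𝕜 E : Type*} [TopologicalSpace 𝕜] [Ring 𝕜] [PartialOrder 𝕜]
    [AddCommMonoid E] [TopologicalSpace E] [Module 𝕜 E] {A : Set E} (l : StrongDual 𝕜 E) {c : 𝕜}
    (hl : ∀ x ∈ A, l x ≤ c) : IsExposed 𝕜 A {x ∈ A | l x = c} := by
  rintro ⟨x₀, hx₀A, hx₀⟩
  refine ⟨l, Set.ext fun x => ⟨fun ⟨hxA, hx⟩ => ⟨hxA, fun y hy => hx ▸ hl y hy⟩,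
    fun ⟨hxA, hx⟩ => ⟨hxA, le_antisymm (hl x hxA) (hx₀ ▸ hx x₀ hx₀A)⟩⟩⟩

theorem IsExposed.eq_convexHull_inter {E : Type*} [AddCommGroup E] [Module ℝ E]
    [TopologicalSpace E] [T2Space E] [IsTopologicalAddGroup E] [ContinuousSMul ℝ E]
    [LocallyConvexSpace ℝ E] {s B : Set E} (hs : s.Finite)
    (hB : IsExposed ℝ (convexHull ℝ s) B) : B = convexHull ℝ (B ∩ s) := by
  have hBconv : Convex ℝ B := hB.convex (convex_convexHull ℝ s)
  refine le_antisymm ?_ (convexHull_min Set.inter_subset_left hBconv)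
  have hBcomp : IsCompact B := hB.isCompact (hs.isCompact_convexHull (𝕜 := ℝ))
  calc B = closure (convexHull ℝ (B.extremePoints ℝ)) :=
        (closure_convexHull_extremePoints hBcomp hBconv).symm
    _ ⊆ closure (convexHull ℝ (B ∩ s)) :=
        closure_mono (convexHull_mono fun x hx => ⟨extremePoints_subset hx,
          extremePoints_convexHull_subset (hB.isExtreme.extremePoints_subset_extremePoints hx)⟩)
    _ = convexHull ℝ (B ∩ s) :=
        ((hs.subset Set.inter_subset_right).isCompact_convexHull (𝕜 := ℝ)).isClosed.closure_eq

section Face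

variable {n p : ℕ}

noncomputable def permFaceFunctional (n p : ℕ) (U : Fin p → Finset (Fin n)) :
    StrongDual ℝ (Fin n → ℝ) :=
  ∑ j ∈ Ico 1 p, ∑ i ∈ cumulBlocks n p U j, ContinuousLinearMap.proj i

theorem permFaceFunctional_apply (U : Fin p → Finset (Fin n)) (x : Fin n → ℝ) :
    permFaceFunctional n p U x = ∑ j ∈ Ico 1 p, ∑ i ∈ cumulBlocks n p U j, x i := by
  simp [permFaceFunctional]

theorem permFaceFunctional_le (U : Fin p → Finset (Fin n)) {x : Fin n → ℝ}
    (hx : x ∈ permutahedron n) :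
    permFaceFunctional n p U x ≤ ∑ j ∈ Ico 1 p, (topSum n #(cumulBlocks n p U j) : ℝ) := by
  rw [permFaceFunctional_apply]
  exact sum_le_sum fun j _ => sum_le_topSum_of_mem_permutahedron hx _

theorem permFace_eq_setOf_permFaceFunctional (U : Fin p → Finset (Fin n)) :
    permFace n p U = {x ∈ permutahedron n |
      permFaceFunctional n p U x = ∑ j ∈ Ico 1 p, (topSum n #(cumulBlocks n p U j) : ℝ)} := by
  ext x
  refine and_congr_right fun hx => ?_
  rw [permFaceFunctional_apply,
    sum_eq_sum_iff_of_le fun j _ => sum_le_topSum_of_mem_permutahedron hx _]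
  simp only [mem_Ico, and_imp]

theorem permFace_isExposed (U : Fin p → Finset (Fin n)) :
    IsExposed ℝ (permutahedron n) (permFace n p U) := by
  rw [permFace_eq_setOf_permFaceFunctional]
  exact isExposed_setOf_eq_of_le _ fun x hx => permFaceFunctional_le U hx

theorem permVert_mem_permFace_iff (U : Fin p → Finset (Fin n)) (σ : Equiv.Perm (Fin n)) :
    permVert n σ ∈ permFace n p U ↔ ∀ j : ℕ, 1 ≤ j → j < p →
      (cumulBlocks n p U j).image (fun i => (σ i : ℕ) + 1) =
        Icc (n - #(cumulBlocks n p U j) + 1) n := by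
  simp only [permFace, Set.mem_ofPred_eq, permVert_mem_permutahedron, true_and,
    sum_permVert_eq_topSum_iff]

theorem permFace_eq_convexHull (U : Fin p → Finset (Fin n)) :
    permFace n p U = convexHull ℝ {y | ∃ σ : Equiv.Perm (Fin n),
      (∀ j : ℕ, 1 ≤ j → j < p →
        (cumulBlocks n p U j).image (fun i => (σ i : ℕ) + 1) =
          Icc (n - #(cumulBlocks n p U j) + 1) n) ∧ y = permVert n σ} := by
  rw [(permFace_isExposed U).eq_convexHull_inter (Set.finite_range _)]
  congr 1
  ext y
  constructor
  · rintro ⟨hy, σ, rfl⟩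
    exact ⟨σ, (permVert_mem_permFace_iff U σ).1 hy, rfl⟩
  · rintro ⟨σ, hσ, rfl⟩
    exact ⟨(permVert_mem_permFace_iff U σ).2 hσ, σ, rfl⟩

end Face

theorem exists_perm_lt_of_lt {α : Type*} [LinearOrder α] {n : ℕ} (b : Fin n → α) :
    ∃ σ : Equiv.Perm (Fin n), ∀ i j, b i < b j → σ j < σ i := by
  refine ⟨(Tuple.sort (OrderDual.toDual ∘ b)).symm, fun i j hij => ?_⟩
  by_contra! h
  have := Tuple.monotone_sort (OrderDual.toDual ∘ b) h
  simp only [comp_apply, Equiv.apply_symm_apply, OrderDual.toDual_le_toDual] at this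
  exact this.not_gt hij

theorem eq_of_surjective_of_lt_imp_lt {α : Type*} {p : ℕ} {b b' : α → Fin p}
    (hb : Surjective b) (heq : ∀ i j, b i = b j → b' i = b' j)
    (hlt : ∀ i j, b i < b j → b' i < b' j) : b = b' := by
  have hmono : StrictMono (b' ∘ surjInv hb) := fun k l hkl =>
    hlt _ _ (by simpa only [surjInv_eq hb] using hkl)
  have hid : b' ∘ surjInv hb = id := (hmono.range_inj strictMono_id).1 <| by
    rw [Set.range_id, Set.range_eq_univ]
    exact Finite.surjective_of_injective hmono.injective
  funext i
  calc b i = (b' ∘ surjInv hb) (b i) := by rw [hid, id]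
    _ = b' i := heq _ _ (surjInv_eq hb (b i))

section FiberSum

variable {ι κ R : Type*} [Fintype ι] [DecidableEq κ] [CommRing R] (b : ι → κ)

def fiberSum : (ι → R) →ₗ[R] (κ → R) :=
  LinearMap.pi fun k => ∑ i ∈ univ.filter (b · = k), LinearMap.proj i

@[simp]
theorem fiberSum_apply (x : ι → R) (k : κ) :
    fiberSum b x k = ∑ i ∈ univ.filter (b · = k), x i := by
  simp [fiberSum]

theorem fiberSum_single [DecidableEq ι] (i : ι) (r : R) :
    fiberSum b (Pi.single i r) = Pi.single (b i) r := by
  ext k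
  simp [Pi.single_apply, eq_comm]

theorem single_sub_single_mem_ker_fiberSum_iff [DecidableEq ι] [Nontrivial R] {i j : ι} :
    (Pi.single i 1 - Pi.single j 1 : ι → R) ∈ LinearMap.ker (fiberSum b) ↔ b i = b j := by
  rw [LinearMap.mem_ker, map_sub, fiberSum_single, fiberSum_single, sub_eq_zero]
  refine ⟨fun h => by_contra fun hne => ?_, fun h => by rw [h]⟩
  simpa [Pi.single_apply, hne] using congrFun h (b i)

theorem fiberSum_surjective [DecidableEq ι] [Fintype κ] (hb : Surjective b) :
    Surjective (fiberSum (R := R) b) := fun w =>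
  ⟨∑ k, Pi.single (surjInv hb k) (w k), by
    simp only [map_sum, fiberSum_single, surjInv_eq hb, univ_sum_single]⟩

theorem ker_fiberSum_le_span [DecidableEq ι] [Fintype κ] (hb : Surjective b) :
    LinearMap.ker (fiberSum (R := R) b) ≤
      Submodule.span R {v | ∃ i j, b i = b j ∧ Pi.single i 1 - Pi.single j 1 = v} := by
  intro v hv
  have hzero : ∑ i, v i • Pi.single (surjInv hb (b i)) (1 : R) = 0 := by
    rw [← sum_fiberwise univ b]
    refine sum_eq_zero fun k _ => ?_
    rw [sum_congr rfl fun i hi => by rw [(mem_filter.1 hi).2], ← sum_smul, ← fiberSum_apply,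
      LinearMap.mem_ker.1 hv, Pi.zero_apply, zero_smul]
  have hv : v = ∑ i, v i • (Pi.single i 1 - Pi.single (surjInv hb (b i)) (1 : R)) := by
    simp only [smul_sub, sum_sub_distrib, hzero, sub_zero]
    exact pi_eq_sum_univ' v
  rw [hv]
  exact Submodule.sum_mem _ fun i _ => Submodule.smul_mem _ _
    (Submodule.subset_span ⟨i, _, (surjInv_eq hb (b i)).symm, rfl⟩)

theorem finrank_ker_fiberSum [DecidableEq ι] [Fintype κ] {K : Type*} [Field K] (hb : Surjective b) :
    Module.finrank K (LinearMap.ker (fiberSum (R := K) b)) = Fintype.card ι - Fintype.card κ := by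
  have := LinearMap.finrank_range_add_finrank_ker (fiberSum (R := K) b)
  rw [LinearMap.range_eq_top.2 (fiberSum_surjective b hb), finrank_top,
    Module.finrank_fintype_fun_eq_card, Module.finrank_fintype_fun_eq_card] at this
  omega

end FiberSum

section Blocks

variable {n p : ℕ}

def blocks (b : Fin n → Fin p) (l : Fin p) : Finset (Fin n) := univ.filter (b · = l)

theorem exists_eq_blocks {U : Fin p → Finset (Fin n)}
    (hdisj : ∀ l l', l ≠ l' → Disjoint (U l) (U l'))
    (hcover : cumulBlocks n p U p = univ) : ∃ b : Fin n → Fin p, U = blocks b := by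
  have hmem : ∀ i, ∃ l, i ∈ U l := fun i => by
    have hi : i ∈ cumulBlocks n p U p := hcover ▸ mem_univ i
    simp only [cumulBlocks, mem_biUnion, mem_filter] at hi
    obtain ⟨l, -, hl⟩ := hi
    exact ⟨l, hl⟩
  choose b hb using hmem
  refine ⟨b, funext fun l => ext fun i => ?_⟩
  simp only [blocks, mem_filter, mem_univ, true_and]
  exact ⟨fun hi => by_contra fun hne => disjoint_left.1 (hdisj _ _ hne) (hb i) hi,
    fun h => h ▸ hb i⟩

theorem surjective_of_blocks_nonempty {b : Fin n → Fin p} (h : ∀ l, (blocks b l).Nonempty) :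
    Surjective b := fun l => by
  obtain ⟨i, hi⟩ := h l
  exact ⟨i, (mem_filter.1 hi).2⟩

theorem cumulBlocks_blocks (b : Fin n → Fin p) (j : ℕ) :
    cumulBlocks n p (blocks b) j = univ.filter (fun i => (b i : ℕ) < j) := by
  ext i
  simp [cumulBlocks, blocks]

theorem fiberSum_eq_sub (b : Fin n → Fin p) (x : Fin n → ℝ) (l : Fin p) :
    fiberSum b x l = ∑ i ∈ univ.filter (fun i => (b i : ℕ) < l + 1), x i -
      ∑ i ∈ univ.filter (fun i => (b i : ℕ) < l), x i := by
  rw [fiberSum_apply, eq_sub_iff_add_eq, ← sum_union]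
  · congr 1
    ext i
    simp only [mem_union, mem_filter, mem_univ, true_and, Fin.ext_iff]
    omega
  · simp only [disjoint_filter, mem_univ, forall_const, Fin.ext_iff]
    omega

variable {b : Fin n → Fin p}

theorem permVert_mem_permFace_blocks_iff {σ : Equiv.Perm (Fin n)} :
    permVert n σ ∈ permFace n p (blocks b) ↔ ∀ i j, b i < b j → σ j < σ i := by
  simp only [permVert_mem_permFace_iff, cumulBlocks_blocks, image_perm_succ_eq_Icc_iff,
    mem_filter, mem_univ, true_and, Fin.lt_def]
  constructor
  · intro h i j hij
    exact h (b i + 1) (by omega) (by omega) i (by omega) j (by omega)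
  · intro h j _ _ i hi i' hi'
    exact h i i' (by omega)

theorem permFace_blocks_nonempty (b : Fin n → Fin p) : (permFace n p (blocks b)).Nonempty := by
  obtain ⟨σ, hσ⟩ := exists_perm_lt_of_lt b
  exact ⟨_, permVert_mem_permFace_blocks_iff.2 hσ⟩

theorem sum_filter_lt_eq_topSum_of_mem_permFace {x : Fin n → ℝ}
    (hx : x ∈ permFace n p (blocks b)) {j : ℕ} (hj : j ≤ p) :
    ∑ i ∈ univ.filter (fun i => (b i : ℕ) < j), x i =
      topSum n #(univ.filter (fun i => (b i : ℕ) < j)) := by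
  rcases Nat.eq_zero_or_pos j with rfl | hj0
  · simp [topSum]
  rcases hj.lt_or_eq with hjp | rfl
  · simpa only [cumulBlocks_blocks] using hx.2 j hj0 hjp
  · simpa using sum_eq_topSum_of_mem_permutahedron hx.1

theorem direction_permFace_blocks_le_ker :
    (affineSpan ℝ (permFace n p (blocks b))).direction ≤ LinearMap.ker (fiberSum b) := by
  rw [direction_affineSpan, vectorSpan_def, Submodule.span_le]
  rintro _ ⟨x, hx, y, hy, rfl⟩
  simp only [SetLike.mem_coe, LinearMap.mem_ker, vsub_eq_sub, map_sub, sub_eq_zero]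
  ext l
  rw [fiberSum_eq_sub, fiberSum_eq_sub,
    sum_filter_lt_eq_topSum_of_mem_permFace hx l.isLt,
    sum_filter_lt_eq_topSum_of_mem_permFace hx l.isLt.le,
    sum_filter_lt_eq_topSum_of_mem_permFace hy l.isLt,
    sum_filter_lt_eq_topSum_of_mem_permFace hy l.isLt.le]

theorem permVert_sub_permVert_swap (σ : Equiv.Perm (Fin n)) (i j : Fin n) :
    permVert n σ - permVert n ((Equiv.swap i j).trans σ) =
      (((σ i : ℕ) : ℝ) - (σ j : ℕ)) • (Pi.single i 1 - Pi.single j 1) := by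
  ext k
  rcases eq_or_ne k i with rfl | hki
  · rcases eq_or_ne k j with rfl | hkj
    · simp
    · simp [permVert, hkj]
  · rcases eq_or_ne k j with rfl | hkj
    · simp [permVert, hki]
    · simp [permVert, hki, hkj, Equiv.swap_apply_of_ne_of_ne hki hkj]

theorem single_sub_single_mem_direction_permFace_blocks {i j : Fin n} (hij : b i = b j) :
    (Pi.single i 1 - Pi.single j 1 : Fin n → ℝ) ∈
      (affineSpan ℝ (permFace n p (blocks b))).direction := by
  rcases eq_or_ne i j with rfl | hne
  · simp
  obtain ⟨σ, hσ⟩ := exists_perm_lt_of_lt b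
  have hswap : ∀ k, b (Equiv.swap i j k) = b k := fun k => by
    rcases eq_or_ne k i with rfl | hki
    · simp [hij]
    rcases eq_or_ne k j with rfl | hkj
    · simp [hij]
    · rw [Equiv.swap_apply_of_ne_of_ne hki hkj]
  have hσ' : ∀ k l, b k < b l → (Equiv.swap i j).trans σ l < (Equiv.swap i j).trans σ k :=
    fun k l hkl => hσ _ _ (by rwa [hswap, hswap])
  have hsub := AffineSubspace.vsub_mem_direction
    (subset_affineSpan ℝ _ (permVert_mem_permFace_blocks_iff.2 hσ))
    (subset_affineSpan ℝ _ (permVert_mem_permFace_blocks_iff.2 hσ'))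
  rw [vsub_eq_sub, permVert_sub_permVert_swap] at hsub
  refine (Submodule.smul_mem_iff _ ?_).1 hsub
  rw [sub_ne_zero, Ne, Nat.cast_inj, Fin.val_inj]
  exact σ.injective.ne hne

theorem single_sub_single_mem_direction_permFace_blocks_iff {i j : Fin n} :
    (Pi.single i 1 - Pi.single j 1 : Fin n → ℝ) ∈
      (affineSpan ℝ (permFace n p (blocks b))).direction ↔ b i = b j :=
  ⟨fun h => (single_sub_single_mem_ker_fiberSum_iff b).1 (direction_permFace_blocks_le_ker h),
    single_sub_single_mem_direction_permFace_blocks⟩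

theorem direction_permFace_blocks (hb : Surjective b) :
    (affineSpan ℝ (permFace n p (blocks b))).direction = LinearMap.ker (fiberSum b) := by
  refine le_antisymm direction_permFace_blocks_le_ker ((ker_fiberSum_le_span b hb).trans ?_)
  rw [Submodule.span_le]
  rintro _ ⟨i, j, hij, rfl⟩
  exact single_sub_single_mem_direction_permFace_blocks hij

theorem finrank_direction_permFace_blocks (hb : Surjective b) :
    Module.finrank ℝ (affineSpan ℝ (permFace n p (blocks b))).direction = n - p := by
  rw [direction_permFace_blocks hb, finrank_ker_fiberSum b hb, Fintype.card_fin, Fintype.card_fin]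

theorem eq_of_permFace_blocks_eq {b' : Fin n → Fin p} (hb : Surjective b)
    (h : permFace n p (blocks b) = permFace n p (blocks b')) : b = b' := by
  have hfib : ∀ i j, b i = b j ↔ b' i = b' j := fun i j => by
    rw [← single_sub_single_mem_direction_permFace_blocks_iff, h,
      single_sub_single_mem_direction_permFace_blocks_iff]
  obtain ⟨σ, hσ⟩ := exists_perm_lt_of_lt b
  have hσ' := permVert_mem_permFace_blocks_iff.1 (h ▸ permVert_mem_permFace_blocks_iff.2 hσ)
  refine eq_of_surjective_of_lt_imp_lt hb (fun i j => (hfib i j).1) fun i j hij => ?_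
  rcases lt_trichotomy (b' i) (b' j) with hlt | heq | hgt
  · exact hlt
  · exact absurd ((hfib i j).2 heq) hij.ne
  · exact absurd (hσ i j hij) (hσ' j i hgt).asymm

end Blocks

theorem permutahedron_partition_faces_general (n p : ℕ)
    (U : Fin p → Finset (Fin n)) (hne : ∀ l, (U l).Nonempty)
    (hdisj : ∀ l l', l ≠ l' → Disjoint (U l) (U l'))
    (hcover : cumulBlocks n p U p = Finset.univ) :
    IsExposed ℝ (permutahedron n) (permFace n p U) ∧
    (permFace n p U).Nonempty ∧
    permFace n p U = convexHull ℝ {y | ∃ σ : Equiv.Perm (Fin n),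
      (∀ j : ℕ, 1 ≤ j → j < p →
        (cumulBlocks n p U j).image (fun i => (σ i : ℕ) + 1) =
          Finset.Icc (n - (cumulBlocks n p U j).card + 1) n) ∧ y = permVert n σ} ∧
    Module.finrank ℝ (affineSpan ℝ (permFace n p U)).direction = n - p ∧
    (∀ U' : Fin p → Finset (Fin n), (∀ l, (U' l).Nonempty) →
      (∀ l l', l ≠ l' → Disjoint (U' l) (U' l')) →
      cumulBlocks n p U' p = Finset.univ →
      permFace n p U = permFace n p U' → U = U') := by
  obtain ⟨b, rfl⟩ := exists_eq_blocks hdisj hcover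
  have hb := surjective_of_blocks_nonempty hne
  refine ⟨permFace_isExposed _, permFace_blocks_nonempty b, permFace_eq_convexHull _,
    finrank_direction_permFace_blocks hb, fun U' _ hdisj' hcover' hF => ?_⟩
  obtain ⟨b', rfl⟩ := exists_eq_blocks hdisj' hcover'
  rw [eq_of_permFace_blocks_eq hb hF]

/-- Let `U_1|⋯|U_p` be an ordered partition of `{1,…,n}` into nonempty blocks.  Then
`F(U_1|⋯|U_p)` is a nonempty exposed face of `P_n`; it equals the convex hull of the
vertices `v_σ` for which `σ` maps `U_1 ∪ ⋯ ∪ U_j` onto the `m_j` largest values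
`{n−m_j+1,…,n}` for all `1 ≤ j < p` (i.e. `U_1` goes to the `#U_1` largest values, `U_2`
to the next `#U_2` values, and so on); its affine dimension equals `n − p`; and distinct
ordered partitions give distinct faces. -/
theorem permutahedron_partition_faces (n p : ℕ) (hn : 1 ≤ n) (hp : 1 ≤ p)
    (U : Fin p → Finset (Fin n)) (hne : ∀ l, (U l).Nonempty)
    (hdisj : ∀ l l', l ≠ l' → Disjoint (U l) (U l'))
    (hcover : cumulBlocks n p U p = Finset.univ) :
    IsExposed ℝ (permutahedron n) (permFace n p U) ∧
    (permFace n p U).Nonempty ∧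
    permFace n p U = convexHull ℝ {y | ∃ σ : Equiv.Perm (Fin n),
      (∀ j : ℕ, 1 ≤ j → j < p →
        (cumulBlocks n p U j).image (fun i => (σ i : ℕ) + 1) =
          Finset.Icc (n - (cumulBlocks n p U j).card + 1) n) ∧ y = permVert n σ} ∧
    Module.finrank ℝ (affineSpan ℝ (permFace n p U)).direction = n - p ∧
    (∀ U' : Fin p → Finset (Fin n), (∀ l, (U' l).Nonempty) →
      (∀ l l', l ≠ l' → Disjoint (U' l) (U' l')) →
      cumulBlocks n p U' p = Finset.univ →
      permFace n p U = permFace n p U' → U = U') :=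
  permutahedron_partition_faces_general n p U hne hdisj hcover
end

section
/- The projections Δ_{r,s} act coassociatively: for all r, s, t ≥ 1 with r + s + t = n + 2, one has (Δ_{r,s} × id) ∘ Δ_{r+s−1, t} = (id × Δ_{s,t}) ∘ Δ_{r, s+t−1} as maps S_n → S_r × S_s × S_t. -/
/-- A word representing an element of `S_n`: a list that is a permutation of `(1,…,n)`. -/
def IsWord (n : ℕ) (l : List ℕ) : Prop := l.Perm (List.range' 1 n)

/-- The canonical projection `Δ_{r,s} : S_n → S_r × S_s` (with `r + s = n + 1`), sending
a word `a` to (i) the subsequence of the entries of `a` lying in `{1,…,r}` and (ii) the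
subsequence of the entries lying in `{r,…,n}`, with `r − 1` subtracted from each entry. -/
def deltaProj (r : ℕ) (l : List ℕ) : List ℕ × List ℕ :=
  (l.filter (fun x => decide (x ≤ r)),
   (l.filter (fun x => decide (r ≤ x))).map (fun x => x - (r - 1)))

/-! Each component on either side keeps the entries of `a` lying in one interval of values and
shifts them down by one amount. Filtering commutes with shifting (`List.filter_map`), so each
identity reduces to a pointwise comparison of the selecting predicates. -/

theorem deltaProj_fst_fst_of_le {r m : ℕ} (hrm : r ≤ m) (l : List ℕ) :
    (deltaProj r (deltaProj m l).1).1 = (deltaProj r l).1 := by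
  simp only [deltaProj, List.filter_filter]
  refine List.filter_congr fun x _ => ?_
  simp only [← Bool.decide_and, decide_eq_decide]
  omega

theorem deltaProj_snd_fst {r : ℕ} (hr : 1 ≤ r) (s : ℕ) (l : List ℕ) :
    (deltaProj r (deltaProj (r + s - 1) l).1).2 = (deltaProj s (deltaProj r l).2).1 := by
  simp only [deltaProj, List.filter_map, List.filter_filter, Function.comp_def]
  congr 1
  refine List.filter_congr fun x _ => ?_
  simp only [← Bool.decide_and, decide_eq_decide]
  omega

theorem deltaProj_snd_snd {r s : ℕ} (hr : 1 ≤ r) (hs : 1 ≤ s) (l : List ℕ) :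
    (deltaProj s (deltaProj r l).2).2 = (deltaProj (r + s - 1) l).2 := by
  simp only [deltaProj, List.filter_map, List.filter_filter, List.map_map, Function.comp_def]
  have hshift : (fun x => x - (r - 1) - (s - 1)) = (fun x => x - (r + s - 1 - 1)) :=
    funext fun x => by omega
  rw [hshift]
  congr 1
  refine List.filter_congr fun x _ => ?_
  simp only [← Bool.decide_and, decide_eq_decide]
  omega

theorem deltaProj_coassoc_general (r s : ℕ) (hr : 1 ≤ r) (hs : 1 ≤ s)
    (a : List ℕ) :
    (deltaProj r (deltaProj (r + s - 1) a).1).1 = (deltaProj r a).1 ∧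
    (deltaProj r (deltaProj (r + s - 1) a).1).2 = (deltaProj s (deltaProj r a).2).1 ∧
    (deltaProj (r + s - 1) a).2 = (deltaProj s (deltaProj r a).2).2 :=
  ⟨deltaProj_fst_fst_of_le (by omega) a, deltaProj_snd_fst hr s a,
    (deltaProj_snd_snd hr hs a).symm⟩

/-- Coassociativity of the projections `Δ`: for `r, s, t ≥ 1` with `r + s + t = n + 2`,
`(Δ_{r,s} × id) ∘ Δ_{r+s−1,t} = (id × Δ_{s,t}) ∘ Δ_{r,s+t−1}` as maps
`S_n → S_r × S_s × S_t` (equality of all three components). -/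
theorem deltaProj_coassoc (n r s t : ℕ) (hr : 1 ≤ r) (hs : 1 ≤ s) (ht : 1 ≤ t)
    (h : r + s + t = n + 2) (a : List ℕ) (ha : IsWord n a) :
    (deltaProj r (deltaProj (r + s - 1) a).1).1 = (deltaProj r a).1 ∧
    (deltaProj r (deltaProj (r + s - 1) a).1).2 = (deltaProj s (deltaProj r a).2).1 ∧
    (deltaProj (r + s - 1) a).2 = (deltaProj s (deltaProj r a).2).2 :=
  deltaProj_coassoc_general r s hr hs a
end

section
/- For every n ≥ 2: (i) ρ_n ∘ γ_n is the identity of (S_2)^{n−1}; (ii) γ_n is injective; (iii) a permutation σ ∈ S_n satisfies γ_n(ρ_n(σ)) = σ if and only if σ lies in the image of γ_n, i.e., the vertices of P_n fixed by γ_n ρ_n are exactly its cubical vertices; (iv) P_n has exactly 2^{n−1} cubical vertices. -/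
/-- `ρ_n : S_n → (S_2)^{n−1}`, where `S_2` is identified with `Bool` (`false` = identity,
`true` = transposition): the `i`-th component (`1 ≤ i ≤ n−1`) is the identity iff `i`
occurs before `i+1` in the word. -/
def rhoWord (n : ℕ) (l : List ℕ) : List Bool :=
  (List.range' 1 (n - 1)).map (fun i => decide (l.idxOf (i + 1) < l.idxOf i))

/-- Auxiliary recursion for `γ`: append `k` at the end if the next letter is the
identity (`false`), prepend `k` at the front otherwise. -/
def gammaAux : ℕ → List Bool → List ℕ → List ℕ
  | _, [], acc => acc
  | k, b :: rest, acc => gammaAux (k + 1) rest (if b then k :: acc else acc ++ [k])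

/-- `γ_n : (S_2)^{n−1} → S_n`: start with `A_2 = (1,2)` or `(2,1)` according to the first
component, then successively append `k` at the end or prepend it at the front. -/
def gammaWord : List Bool → List ℕ
  | [] => [1]
  | b :: rest => gammaAux 3 rest (if b then [2, 1] else [1, 2])

theorem length_rhoWord (n : ℕ) (l : List ℕ) : (rhoWord n l).length = n - 1 := by
  simp [rhoWord]

theorem rhoWord_sub_one_add_one (n : ℕ) (l : List ℕ) : rhoWord (n - 1 + 1) l = rhoWord n l :=
  rfl

section Insertion

variable {m : ℕ}

theorem rhoWord_succ (hm : 1 ≤ m) (l : List ℕ) :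
    rhoWord (m + 1) l = rhoWord m l ++ [decide (l.idxOf (m + 1) < l.idxOf m)] := by
  obtain ⟨k, rfl⟩ : ∃ k, m = k + 1 := ⟨m - 1, by omega⟩
  simp only [rhoWord, Nat.add_sub_cancel, List.range'_1_concat, List.map_append,
    List.map_cons, List.map_nil, Nat.add_comm 1 k]

theorem rhoWord_cons_of_lt {k : ℕ} (hk : m < k) (l : List ℕ) :
    rhoWord m (k :: l) = rhoWord m l := by
  refine List.map_congr_left fun i hi => ?_
  rw [List.mem_range'_1] at hi
  rw [List.idxOf_cons_ne l (by omega : k ≠ i + 1), List.idxOf_cons_ne l (by omega : k ≠ i)]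
  simp

theorem rhoWord_append_of_subset {l : List ℕ} (h : List.range' 1 m ⊆ l) (l' : List ℕ) :
    rhoWord m (l ++ l') = rhoWord m l := by
  refine List.map_congr_left fun i hi => ?_
  rw [List.mem_range'_1] at hi
  rw [List.idxOf_append_of_mem (h (List.mem_range'_1.2 ⟨by omega, by omega⟩)),
    List.idxOf_append_of_mem (h (List.mem_range'_1.2 ⟨by omega, by omega⟩))]

theorem perm_insert_succ {l : List ℕ} (hl : l.Perm (List.range' 1 m)) (b : Bool) :
    (if b then (m + 1) :: l else l ++ [m + 1]).Perm (List.range' 1 (m + 1)) := by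
  rw [List.range'_1_concat, Nat.add_comm 1 m]
  cases b
  · exact hl.append_right _
  · exact (List.perm_append_singleton _ _).symm.trans (hl.append_right _)

theorem rhoWord_insert_succ {l : List ℕ} (hm : 1 ≤ m) (hl : l.Perm (List.range' 1 m)) (b : Bool) :
    rhoWord (m + 1) (if b then (m + 1) :: l else l ++ [m + 1]) = rhoWord m l ++ [b] := by
  have hmem : ∀ i, i ∈ l ↔ 1 ≤ i ∧ i < 1 + m := fun i => by
    rw [hl.mem_iff, List.mem_range'_1]
  rw [rhoWord_succ hm]
  cases b
  · have hm_mem : m ∈ l := (hmem m).2 (by omega)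
    have hsub : List.range' 1 m ⊆ l := fun i hi => (hmem i).2 (List.mem_range'_1.1 hi)
    have hnot : m + 1 ∉ l := fun h => by have := (hmem _).1 h; omega
    rw [if_neg Bool.false_ne_true, rhoWord_append_of_subset hsub, List.idxOf_append_of_mem hm_mem,
      List.idxOf_append_of_notMem hnot]
    simpa using (List.idxOf_lt_length_iff.2 hm_mem).le
  · simp [rhoWord_cons_of_lt (Nat.lt_succ_self m), List.idxOf_cons_ne l (by omega : m + 1 ≠ m)]

end Insertion

theorem rhoWord_gammaAux (rest : List Bool) {m : ℕ} {acc : List ℕ} (hm : 1 ≤ m)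
    (hacc : acc.Perm (List.range' 1 m)) :
    rhoWord (m + rest.length) (gammaAux (m + 1) rest acc) = rhoWord m acc ++ rest := by
  induction rest generalizing m acc with
  | nil => simp [gammaAux]
  | cons b rest ih =>
    rw [gammaAux, List.length_cons, ← Nat.add_assoc, Nat.add_right_comm,
      ih (by omega) (perm_insert_succ hacc b), rhoWord_insert_succ hm hacc, List.append_assoc,
      List.singleton_append]

theorem gammaWord_eq_gammaAux (w : List Bool) : gammaWord w = gammaAux 2 w [1] := by
  rcases w with _ | ⟨_ | _, _⟩ <;> rfl

theorem rhoWord_gammaWord (w : List Bool) : rhoWord (w.length + 1) (gammaWord w) = w := by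
  rw [gammaWord_eq_gammaAux, Nat.add_comm, rhoWord_gammaAux w le_rfl (List.Perm.refl [1])]
  rfl

theorem leftInvOn_rhoWord_gammaWord (n : ℕ) :
    Set.LeftInvOn (rhoWord n) gammaWord {w | w.length = n - 1} := fun w hw => by
  rw [← rhoWord_sub_one_add_one, ← Set.mem_ofPred_eq.mp hw, rhoWord_gammaWord]

theorem ncard_setOf_length_eq_bool (m : ℕ) : {w : List Bool | w.length = m}.ncard = 2 ^ m := by
  rw [← Nat.card_coe_set_eq]
  change Nat.card (List.Vector Bool m) = _
  simp

theorem gamma_rho_cubical_general (n : ℕ) :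
    (∀ w : List Bool, w.length = n - 1 → rhoWord n (gammaWord w) = w) ∧
    (∀ w w' : List Bool, w.length = n - 1 → w'.length = n - 1 →
      gammaWord w = gammaWord w' → w = w') ∧
    (∀ l : List ℕ, IsWord n l →
      (gammaWord (rhoWord n l) = l ↔ ∃ w : List Bool, w.length = n - 1 ∧ gammaWord w = l)) ∧
    {l : List ℕ | ∃ w : List Bool, w.length = n - 1 ∧ gammaWord w = l}.ncard = 2 ^ (n - 1) := by
  have hinv := leftInvOn_rhoWord_gammaWord n
  refine ⟨fun w hw => hinv hw, fun w w' hw hw' h => hinv.injOn hw hw' h,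
    fun l _ => ⟨fun hl => ⟨rhoWord n l, length_rhoWord n l, hl⟩, ?_⟩, ?_⟩
  · rintro ⟨w, hw, rfl⟩
    rw [hinv hw]
  · exact hinv.injOn.ncard_image.trans (ncard_setOf_length_eq_bool _)

/-- For every `n ≥ 2`: (i) `ρ_n ∘ γ_n = id` on `(S_2)^{n−1}`; (ii) `γ_n` is injective;
(iii) a permutation `σ ∈ S_n` satisfies `γ_n(ρ_n(σ)) = σ` iff `σ` lies in the image of
`γ_n` (the vertices of `P_n` fixed by `γ_n ρ_n` are exactly its cubical vertices);
(iv) `P_n` has exactly `2^{n−1}` cubical vertices. -/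
theorem gamma_rho_cubical (n : ℕ) (hn : 2 ≤ n) :
    (∀ w : List Bool, w.length = n - 1 → rhoWord n (gammaWord w) = w) ∧
    (∀ w w' : List Bool, w.length = n - 1 → w'.length = n - 1 →
      gammaWord w = gammaWord w' → w = w') ∧
    (∀ l : List ℕ, IsWord n l →
      (gammaWord (rhoWord n l) = l ↔ ∃ w : List Bool, w.length = n - 1 ∧ gammaWord w = l)) ∧
    {l : List ℕ | ∃ w : List Bool, w.length = n - 1 ∧ gammaWord w = l}.ncard = 2 ^ (n - 1) :=
  gamma_rho_cubical_general n
end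

section
/- For every n ≥ 2 and every ordered partition A|B of {1,…,n+1} into two nonempty blocks, one has A⊔̲B = A⊔̄B = {1, 2, …, n}. -/
/-- The indexing map `I_M : M → {1,…,#M}` of an increasingly ordered set `M ⊂ ℕ`:
`idxMap M x` is the rank of `x` in `M` (the number of elements of `M` that are `≤ x`). -/
def idxMap (M : Finset ℕ) (x : ℕ) : ℕ := (M.filter (fun y => y ≤ x)).card

/-- The lower disjoint union `A⊔̲B` (with respect to `U`) of nonempty disjoint subsets
`A, B` with `A ∪ B ⊆ U`: `I_{U∖A}(B) + #A − 1` if `min B > min(U∖A)`, and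
`(I_{U∖A}(B) + #A − 1) ∪ {1,…,#A}` if `min B = min(U∖A)`. -/
def lowerDU (U A B : Finset ℕ) : Finset ℕ :=
  let base := (B.image (idxMap (U \ A))).image (fun x => x + (A.card - 1))
  if (U \ A).min < B.min then base else base ∪ Finset.Icc 1 A.card

/-- The upper disjoint union `A⊔̄B` (with respect to `U`): `I_{U∖B}(A)` if
`max A < max(U∖B)`, and `I_{U∖B}(A) ∪ ({#U−#B+1,…,#U} − 1)` if `max A = max(U∖B)`. -/
def upperDU (U A B : Finset ℕ) : Finset ℕ :=
  let base := A.image (idxMap (U \ B))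
  if A.max < (U \ B).max then base
  else base ∪ Finset.Icc (U.card - B.card) (U.card - 1)

/-
When `U = A ⊔ B` we have `U ∖ A = B` and `U ∖ B = A`, so both disjoint unions fall into their
second case. The indexing map of a set is a bijection onto `{1,…,#M}`, so `A⊔̲B` is
`{#A,…,#A+#B−1} ∪ {1,…,#A}` and `A⊔̄B` is `{1,…,#A} ∪ {#A,…,#A+#B−1}`; both are
`{1,…,#U−1}`, the two blocks overlapping in `#A`.
-/

open Finset

lemma idxMap_strictMonoOn (M : Finset ℕ) : StrictMonoOn (idxMap M) M := by
  intro x _ y hy hxy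
  apply card_lt_card
  refine ⟨monotone_filter_right M fun _ _ hz => hz.trans hxy.le, fun hsub => ?_⟩
  have hyx : y ≤ x := (mem_filter.mp (hsub (mem_filter.mpr ⟨hy, le_rfl⟩))).2
  omega

lemma image_idxMap (M : Finset ℕ) : M.image (idxMap M) = Icc 1 #M := by
  refine eq_of_subset_of_card_le (fun k hk => ?_) ?_
  · obtain ⟨x, hx, rfl⟩ := mem_image.mp hk
    exact mem_Icc.mpr ⟨card_pos.mpr ⟨x, mem_filter.mpr ⟨hx, le_rfl⟩⟩, card_filter_le _ _⟩
  · rw [Nat.card_Icc, card_image_of_injOn (idxMap_strictMonoOn M).injOn]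
    omega

section Partition

variable {A B : Finset ℕ}

lemma lowerDU_union (hA : A.Nonempty) (hB : B.Nonempty) (hd : Disjoint A B) :
    lowerDU (A ∪ B) A B = Icc 1 (#A + #B - 1) := by
  have hA₁ := card_pos.mpr hA
  have hB₁ := card_pos.mpr hB
  simp only [lowerDU, union_sdiff_cancel_left hd, lt_irrefl, if_false, image_idxMap,
    image_add_right_Icc]
  ext k
  simp only [mem_union, mem_Icc]
  omega

lemma upperDU_union (hA : A.Nonempty) (hB : B.Nonempty) (hd : Disjoint A B) :
    upperDU (A ∪ B) A B = Icc 1 (#A + #B - 1) := by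
  have hA₁ := card_pos.mpr hA
  have hB₁ := card_pos.mpr hB
  simp only [upperDU, union_sdiff_cancel_right hd, lt_irrefl, if_false, image_idxMap,
    card_union_of_disjoint hd]
  ext k
  simp only [mem_union, mem_Icc]
  omega

end Partition

theorem lowerDU_upperDU_of_partition_general (n : ℕ) (A B : Finset ℕ)
    (hA : A.Nonempty) (hB : B.Nonempty) (hd : Disjoint A B)
    (hu : A ∪ B = Finset.Icc 1 (n + 1)) :
    lowerDU (Finset.Icc 1 (n + 1)) A B = Finset.Icc 1 n ∧
    upperDU (Finset.Icc 1 (n + 1)) A B = Finset.Icc 1 n := by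
  have hcard : #A + #B - 1 = n := by
    rw [← card_union_of_disjoint hd, hu, Nat.card_Icc]
    omega
  rw [← hu, lowerDU_union hA hB hd, upperDU_union hA hB hd, hcard]
  exact ⟨rfl, rfl⟩

/-- For every `n ≥ 2` and every ordered partition `A|B` of `{1,…,n+1}` into two nonempty
blocks, one has `A⊔̲B = A⊔̄B = {1,…,n}`. -/
theorem lowerDU_upperDU_of_partition (n : ℕ) (hn : 2 ≤ n) (A B : Finset ℕ)
    (hA : A.Nonempty) (hB : B.Nonempty) (hd : Disjoint A B)
    (hu : A ∪ B = Finset.Icc 1 (n + 1)) :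
    lowerDU (Finset.Icc 1 (n + 1)) A B = Finset.Icc 1 n ∧
    upperDU (Finset.Icc 1 (n + 1)) A B = Finset.Icc 1 n :=
  lowerDU_upperDU_of_partition_general n A B hA hB hd hu
end
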